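/- Let H, W, k be positive integers with k ∣ H and k ∣ W, and define the nearest-neighbor down-sampling frequency response β(u',v') := (1/k²) · Σ_{s=0}^{k-1} Σ_{t=0}^{k-1} exp(2πi(u's/(2H) + v't/(2W))). For every integer u' with -H ≤ u' ≤ H-1 and every integer v' with -W ≤ v' ≤ W-1, β(u',v') ≠ 0 if and only if u' is not a nonzero integer multiple of 2H/k and v' is not a nonzero integer multiple of 2W/k. (In particular, for k ≥ 2 there exist frequencies outside the low-frequency region {-H/k,…,H/k-1}×{-W/k,…,W/k-1} at which β is nonzero.) -/

import Mathlib

/-- The nearest-neighbor `k`-fold down-sampling frequency response on the `2H × 2W` grid: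
`β(u',v') = (1/k²) ∑_{s=0}^{k-1} ∑_{t=0}^{k-1} exp(2πi(u's/(2H) + v't/(2W)))`. -/
noncomputable def betaNN (H W k : ℤ) (u' v' : ℤ) : ℂ :=
  (1 / (k : ℂ) ^ 2) *
    ∑ s ∈ Finset.Icc (0 : ℤ) (k - 1), ∑ t ∈ Finset.Icc (0 : ℤ) (k - 1),
      Complex.exp ((2 * (Real.pi : ℂ) * Complex.I) *
        ((u' : ℂ) * (s : ℂ) / (2 * (H : ℂ)) + (v' : ℂ) * (t : ℂ) / (2 * (W : ℂ))))

/-! β(u, v) factors as k⁻² times a sum over rows and a sum over columns, and each is a geometric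
sum `∑_{s<k} z^s` with `z = exp(πiu/N)`, `N ∈ {H, W}`. Such a sum vanishes iff `z^k = 1` and `z ≠ 1`. Now
`z^k = 1` iff `2N ∣ uk` iff `2(N/k) ∣ u`, while `z = 1` iff `2N ∣ u`, which in the band
`-N ≤ u < N` means `u = 0`. -/

open Finset Complex Real

theorem Finset.sum_Icc_zero_sub_one_eq_sum_range {M : Type*} [AddCommMonoid M] (k : ℤ)
    (f : ℤ → M) : ∑ s ∈ Icc 0 (k - 1), f s = ∑ i ∈ range k.toNat, f i := by
  rw [Int.Icc_eq_finset_map, sum_map]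
  simp

theorem geom_sum_eq_zero_iff {K : Type*} [Field K] [CharZero K] {x : K} {n : ℕ} (hn : n ≠ 0) :
    ∑ i ∈ range n, x ^ i = 0 ↔ x ^ n = 1 ∧ x ≠ 1 := by
  by_cases hx : x = 1
  · simp [hx, hn]
  · rw [geom_sum_eq hx, div_eq_zero_iff, sub_eq_zero, sub_eq_zero]
    simp [hx]

theorem Complex.exp_two_pi_mul_I_mul_int_div_eq_one_iff {p N : ℤ} (hN : N ≠ 0) :
    cexp (2 * π * I * p / N) = 1 ↔ N ∣ p := by
  rw [exp_eq_one_iff]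
  conv in _ = _ => rw [← mul_comm (2 * π * I), mul_div_assoc, mul_right_inj' (by simp)]
  field_simp [Int.cast_ne_zero.mpr hN]
  norm_cast

noncomputable def betaNN1D (N k u : ℤ) : ℂ :=
  ∑ s ∈ Icc (0 : ℤ) (k - 1), cexp (2 * π * I * (u * s / (2 * N)))

theorem betaNN_eq_mul (H W k u v : ℤ) :
    betaNN H W k u v = 1 / (k : ℂ) ^ 2 * (betaNN1D H k u * betaNN1D W k v) := by
  simp only [betaNN, betaNN1D, sum_mul_sum, ← Complex.exp_add, mul_add]

theorem betaNN1D_eq_geom_sum (N k u : ℤ) :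
    betaNN1D N k u = ∑ i ∈ range k.toNat, cexp (2 * π * I * u / (2 * N)) ^ i := by
  rw [betaNN1D, sum_Icc_zero_sub_one_eq_sum_range]
  refine sum_congr rfl fun i _ => ?_
  rw [← Complex.exp_nat_mul]
  push_cast
  ring_nf

theorem betaNN1D_eq_zero_iff {N k u : ℤ} (hk : 0 < k) (hkN : k ∣ N) (hu : -N ≤ u)
    (hu' : u ≤ N - 1) : betaNN1D N k u = 0 ↔ ∃ a : ℤ, a ≠ 0 ∧ u = a * (2 * (N / k)) := by
  obtain ⟨m, rfl⟩ := hkN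
  have hm : 0 < m := by nlinarith
  have hN : 2 * (k * m) ≠ 0 := by positivity
  have hk_toNat : ((k.toNat : ℕ) : ℂ) = k := mod_cast Int.toNat_of_nonneg hk.le
  have hz_pow : cexp (k.toNat * (2 * π * I * u / (2 * (k * m : ℤ)))) = 1 ↔ 2 * m ∣ u := by
    rw [hk_toNat, ← mul_dvd_mul_iff_right hk.ne', show 2 * m * k = 2 * (k * m) by ring,
      ← exp_two_pi_mul_I_mul_int_div_eq_one_iff hN]
    push_cast
    ring_nf
  have hz : cexp (2 * π * I * u / (2 * (k * m : ℤ))) = 1 ↔ u = 0 := by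
    have hdvd := exp_two_pi_mul_I_mul_int_div_eq_one_iff (p := u) hN
    push_cast at hdvd ⊢
    rw [hdvd]
    exact ⟨fun h => Int.eq_zero_of_abs_lt_dvd h (by rw [abs_lt]; omega), fun h => h ▸ dvd_zero _⟩
  rw [Int.mul_ediv_cancel_left m hk.ne', betaNN1D_eq_geom_sum,
    geom_sum_eq_zero_iff (by omega), ← Complex.exp_nat_mul, hz_pow, ne_eq, hz]
  constructor
  · rintro ⟨⟨a, rfl⟩, hu0⟩
    exact ⟨a, by rintro rfl; simp at hu0, mul_comm _ _⟩
  · rintro ⟨a, ha, rfl⟩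
    exact ⟨dvd_mul_left _ _, mul_ne_zero ha (by positivity)⟩

theorem stmt_11_general (H W k : ℤ) (hk : 0 < k)
    (hkH : k ∣ H) (hkW : k ∣ W) :
    ∀ u' v' : ℤ, -H ≤ u' → u' ≤ H - 1 → -W ≤ v' → v' ≤ W - 1 →
      (betaNN H W k u' v' ≠ 0 ↔
        (¬ ∃ a : ℤ, a ≠ 0 ∧ u' = a * (2 * (H / k))) ∧
        (¬ ∃ b : ℤ, b ≠ 0 ∧ v' = b * (2 * (W / k)))) := by
  intro u' v' hu hu' hv hv'
  have hk2 : 1 / (k : ℂ) ^ 2 ≠ 0 := by simp [hk.ne']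
  rw [betaNN_eq_mul, mul_ne_zero_iff, mul_ne_zero_iff, and_iff_right hk2, ne_eq, ne_eq,
    betaNN1D_eq_zero_iff hk hkH hu hu', betaNN1D_eq_zero_iff hk hkW hv hv']

/-- For frequencies `(u',v')` in the band `[-H, H-1] × [-W, W-1]`, the nearest-neighbor
down-sampling frequency response `β(u',v')` is nonzero if and only if `u'` is not a nonzero
integer multiple of `2H/k` and `v'` is not a nonzero integer multiple of `2W/k`. -/
theorem stmt_11 (H W k : ℤ) (hH : 0 < H) (hW : 0 < W) (hk : 0 < k)
    (hkH : k ∣ H) (hkW : k ∣ W) :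
    ∀ u' v' : ℤ, -H ≤ u' → u' ≤ H - 1 → -W ≤ v' → v' ≤ W - 1 →
      (betaNN H W k u' v' ≠ 0 ↔
        (¬ ∃ a : ℤ, a ≠ 0 ∧ u' = a * (2 * (H / k))) ∧
        (¬ ∃ b : ℤ, b ≠ 0 ∧ v' = b * (2 * (W / k)))) :=
  stmt_11_general H W k hk hkH hkW
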